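/- Let m ≥ 3, let r > 0, and let a_1 < a_2 < … < a_m be real numbers with a_m − a_1 < 2r. For each i let C_i be the circle of radius r centered at (a_i, 0) in ℝ². Then: (a) every two of the circles C_1, …, C_m intersect in exactly two points; (b) no point of the plane lies on three of the circles; and (c) for all i < j < k, both intersection points of C_i and C_k lie in the open disk of C_j, both intersection points of C_i and C_j lie strictly outside the closed disk of C_k, and both intersection points of C_j and C_k lie strictly outside the closed disk of C_i. In particular every triple of these circles is NonKrupp. -/

import Mathlib

/-!
A point `p` on two circles of radius `r` centred at `(b, 0)` and `(c, 0)`, `b ≠ c`, has abscissa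
`(b + c) / 2`, so its squared distance to any point `(d, 0)` of the axis is
`r ^ 2 + (b - d) * (c - d)`. The sign of `(b - d) * (c - d)` therefore decides whether `p` lies
inside, on or outside the circle of radius `r` about `(d, 0)`, and since this quantity is the same
for both intersection points, no circle centred on the axis separates them.
-/

noncomputable section

/-- The Euclidean plane. -/
abbrev E2 := EuclideanSpace ℝ (Fin 2)

/-- The point `(x, y)` of the plane. -/
def pt (x y : ℝ) : E2 := WithLp.toLp 2 ![x, y]

/-- The circle with center `c` and radius `r` separates the points `p` and `q`
(not lying on it) if exactly one of them lies in its open disk. -/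
def Separates (c : E2) (r : ℝ) (p q : E2) : Prop :=
  Xor' (p ∈ Metric.ball c r) (q ∈ Metric.ball c r)

/-- The circle with center `c`, radius `r` does not separate the two intersection points of
the other two circles. -/
def NonSepInt (c : E2) (r : ℝ) (c₁ : E2) (r₁ : ℝ) (c₂ : E2) (r₂ : ℝ) : Prop :=
  ∀ p q : E2, p ≠ q → Metric.sphere c₁ r₁ ∩ Metric.sphere c₂ r₂ = {p, q} →
    ¬ Separates c r p q

@[simp] lemma pt_apply_zero (x y : ℝ) : pt x y 0 = x := rfl

@[simp] lemma pt_apply_one (x y : ℝ) : pt x y 1 = y := rfl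

lemma eq_pt (p : E2) : p = pt (p 0) (p 1) := by
  ext i; fin_cases i <;> rfl

lemma dist_sq_eq_coords (p q : E2) : dist p q ^ 2 = (p 0 - q 0) ^ 2 + (p 1 - q 1) ^ 2 := by
  simp [EuclideanSpace.dist_sq_eq, Fin.sum_univ_two, Real.dist_eq, sq_abs]

lemma mem_sphere_iff_coords {p c : E2} {r : ℝ} (hr : 0 ≤ r) :
    p ∈ Metric.sphere c r ↔ (p 0 - c 0) ^ 2 + (p 1 - c 1) ^ 2 = r ^ 2 := by
  rw [Metric.mem_sphere, ← dist_sq_eq_coords, sq_eq_sq₀ dist_nonneg hr]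

lemma abs_sub_le_of_monotoneOn_Icc {α : Type*} [Preorder α] {f : α → ℝ} {x y i j : α}
    (hf : MonotoneOn f (Set.Icc x y)) (hi : i ∈ Set.Icc x y) (hj : j ∈ Set.Icc x y) :
    |f i - f j| ≤ f y - f x := by
  have hxy : x ≤ y := hi.1.trans hi.2
  have hmem : ∀ k ∈ Set.Icc x y, f k ∈ Set.Icc (f x) (f y) := fun k hk =>
    ⟨hf ⟨le_rfl, hxy⟩ hk hk.1, hf hk ⟨hxy, le_rfl⟩ hk.2⟩
  exact Real.dist_le_of_mem_Icc (hmem i hi) (hmem j hj)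

section AxisCircles

variable {b c r : ℝ} {p q : E2}

lemma two_mul_fst_eq_of_mem_sphere_inter (hbc : b ≠ c)
    (hp : p ∈ Metric.sphere (pt b 0) r ∩ Metric.sphere (pt c 0) r) : 2 * p 0 = b + c := by
  have h := congrArg (· ^ 2) (hp.1.trans hp.2.symm)
  simp only [dist_sq_eq_coords, pt_apply_zero, pt_apply_one] at h
  have h' : (c - b) * (2 * p 0 - b - c) = 0 := by linear_combination h
  rcases mul_eq_zero.1 h' with h' | h'
  · exact absurd (sub_eq_zero.1 h').symm hbc
  · linarith

theorem dist_pt_sq_of_mem_sphere_inter (hbc : b ≠ c)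
    (hp : p ∈ Metric.sphere (pt b 0) r ∩ Metric.sphere (pt c 0) r) (d : ℝ) :
    dist p (pt d 0) ^ 2 = r ^ 2 + (b - d) * (c - d) := by
  have hx := two_mul_fst_eq_of_mem_sphere_inter hbc hp
  have hb : dist p (pt b 0) ^ 2 = r ^ 2 := by rw [hp.1]
  simp only [dist_sq_eq_coords, pt_apply_zero, pt_apply_one] at hb ⊢
  linear_combination hb + (b - d) * hx

lemma dist_pt_lt_of_mem_sphere_inter {d : ℝ} (hbc : b ≠ c)
    (hp : p ∈ Metric.sphere (pt b 0) r ∩ Metric.sphere (pt c 0) r)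
    (hd : (b - d) * (c - d) < 0) : dist p (pt d 0) < r := by
  have hr : 0 ≤ r := hp.1 ▸ dist_nonneg
  rw [← sq_lt_sq₀ dist_nonneg hr, dist_pt_sq_of_mem_sphere_inter hbc hp]
  linarith

lemma lt_dist_pt_of_mem_sphere_inter {d : ℝ} (hbc : b ≠ c)
    (hp : p ∈ Metric.sphere (pt b 0) r ∩ Metric.sphere (pt c 0) r)
    (hd : 0 < (b - d) * (c - d)) : r < dist p (pt d 0) := by
  have hr : 0 ≤ r := hp.1 ▸ dist_nonneg
  rw [← sq_lt_sq₀ hr dist_nonneg, dist_pt_sq_of_mem_sphere_inter hbc hp]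
  linarith

lemma eq_or_eq_of_mem_sphere_inter_of_mem_sphere {d : ℝ} (hbc : b ≠ c)
    (hp : p ∈ Metric.sphere (pt b 0) r ∩ Metric.sphere (pt c 0) r)
    (hd : p ∈ Metric.sphere (pt d 0) r) : d = b ∨ d = c := by
  have h := dist_pt_sq_of_mem_sphere_inter hbc hp d
  rw [Metric.mem_sphere.1 hd] at h
  rcases mul_eq_zero.1 (by linarith : (b - d) * (c - d) = 0) with h | h
  · exact Or.inl (sub_eq_zero.1 h).symm
  · exact Or.inr (sub_eq_zero.1 h).symm

lemma dist_pt_eq_of_mem_sphere_inter (hbc : b ≠ c)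
    (hp : p ∈ Metric.sphere (pt b 0) r ∩ Metric.sphere (pt c 0) r)
    (hq : q ∈ Metric.sphere (pt b 0) r ∩ Metric.sphere (pt c 0) r) (d : ℝ) :
    dist p (pt d 0) = dist q (pt d 0) := by
  rw [← sq_eq_sq₀ dist_nonneg dist_nonneg, dist_pt_sq_of_mem_sphere_inter hbc hp,
    dist_pt_sq_of_mem_sphere_inter hbc hq]

lemma nonSepInt_pt (hbc : b ≠ c) (d s : ℝ) : NonSepInt (pt d 0) s (pt b 0) r (pt c 0) r := by
  intro p q _ hpq
  have hp : p ∈ Metric.sphere (pt b 0) r ∩ Metric.sphere (pt c 0) r :=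
    hpq ▸ Set.mem_insert p {q}
  have hq : q ∈ Metric.sphere (pt b 0) r ∩ Metric.sphere (pt c 0) r :=
    hpq ▸ Set.mem_insert_of_mem p rfl
  rw [Separates, Metric.mem_ball, Metric.mem_ball, dist_pt_eq_of_mem_sphere_inter hbc hp hq d]
  exact (xor_self _).mp

theorem exists_sphere_inter_eq_pair (hbc : b ≠ c) (hbcr : |b - c| < 2 * r) :
    ∃ p q : E2, p ≠ q ∧ Metric.sphere (pt b 0) r ∩ Metric.sphere (pt c 0) r = {p, q} := by
  have hr : 0 ≤ r := by linarith [abs_nonneg (b - c)]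
  have hpos : 0 < r ^ 2 - ((b - c) / 2) ^ 2 := by
    nlinarith [abs_nonneg (b - c), sq_abs (b - c)]
  set h := √(r ^ 2 - ((b - c) / 2) ^ 2)
  have hh : h ^ 2 = r ^ 2 - ((b - c) / 2) ^ 2 := Real.sq_sqrt hpos.le
  have h0 : 0 < h := Real.sqrt_pos.2 hpos
  refine ⟨pt ((b + c) / 2) h, pt ((b + c) / 2) (-h), fun he => ?_, ?_⟩
  · have := congrArg (· 1) he
    simp only [pt_apply_one] at this
    linarith
  ext p
  simp only [Set.mem_insert_iff, Set.mem_singleton_iff]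
  constructor
  · intro hp
    have hx := two_mul_fst_eq_of_mem_sphere_inter hbc hp
    have hb := (mem_sphere_iff_coords hr).1 hp.1
    simp only [pt_apply_zero, pt_apply_one, sub_zero] at hb
    have hy : (p 1 - h) * (p 1 + h) = 0 := by
      linear_combination hb - hh + ((3 * b - c) / 2 - p 0) / 2 * hx
    rw [eq_pt p]
    rcases mul_eq_zero.1 hy with hy | hy
    · left; congr 1 <;> linarith
    · right; congr 1 <;> linarith
  · rintro (rfl | rfl) <;> constructor <;>
      simp only [mem_sphere_iff_coords hr, pt_apply_zero, pt_apply_one] <;>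
      linear_combination hh

end AxisCircles

theorem stmt5_general (m : ℕ) (r : ℝ) (a : ℕ → ℝ)
    (hmono : ∀ i j : ℕ, 1 ≤ i → i < j → j ≤ m → a i < a j)
    (hgap : a m - a 1 < 2 * r) :
    let C : ℕ → Set E2 := fun i => Metric.sphere (pt (a i) 0) r
    (∀ i j : ℕ, 1 ≤ i → i ≤ m → 1 ≤ j → j ≤ m → i ≠ j →
      ∃ p q : E2, p ≠ q ∧ C i ∩ C j = {p, q}) ∧
    (∀ i j k : ℕ, 1 ≤ i → i ≤ m → 1 ≤ j → j ≤ m → 1 ≤ k → k ≤ m →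
      i ≠ j → i ≠ k → j ≠ k →
      ∀ x : E2, ¬ (x ∈ C i ∧ x ∈ C j ∧ x ∈ C k)) ∧
    (∀ i j k : ℕ, 1 ≤ i → i < j → j < k → k ≤ m →
      (∀ p ∈ C i ∩ C k, dist p (pt (a j) 0) < r) ∧
      (∀ p ∈ C i ∩ C j, r < dist p (pt (a k) 0)) ∧
      (∀ p ∈ C j ∩ C k, r < dist p (pt (a i) 0))) ∧
    (∀ i j k : ℕ, 1 ≤ i → i ≤ m → 1 ≤ j → j ≤ m → 1 ≤ k → k ≤ m →
      i ≠ j → i ≠ k → j ≠ k →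
      NonSepInt (pt (a i) 0) r (pt (a j) 0) r (pt (a k) 0) r) := by
  intro C
  have hmono' : StrictMonoOn a (Set.Icc 1 m) := fun i hi j hj hij => hmono i j hi.1 hij hj.2
  have hne : ∀ i j, 1 ≤ i → i ≤ m → 1 ≤ j → j ≤ m → i ≠ j → a i ≠ a j :=
    fun i j hi hi' hj hj' hij => hij ∘ hmono'.injOn ⟨hi, hi'⟩ ⟨hj, hj'⟩
  have hclose : ∀ i j, 1 ≤ i → i ≤ m → 1 ≤ j → j ≤ m → |a i - a j| < 2 * r :=
    fun i j hi hi' hj hj' =>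
      (abs_sub_le_of_monotoneOn_Icc hmono'.monotoneOn ⟨hi, hi'⟩ ⟨hj, hj'⟩).trans_lt hgap
  refine ⟨fun i j hi hi' hj hj' hij => exists_sphere_inter_eq_pair
    (hne i j hi hi' hj hj' hij) (hclose i j hi hi' hj hj'), ?_, ?_, ?_⟩
  · intro i j k hi hi' hj hj' hk hk' hij hik hjk x ⟨hxi, hxj, hxk⟩
    rcases eq_or_eq_of_mem_sphere_inter_of_mem_sphere (hne i j hi hi' hj hj' hij) ⟨hxi, hxj⟩ hxk
      with h | h
    exacts [hne i k hi hi' hk hk' hik h.symm, hne j k hj hj' hk hk' hjk h.symm]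
  · intro i j k hi hij hjk hk
    have hij' : a i < a j := hmono i j hi hij (by omega)
    have hjk' : a j < a k := hmono j k (by omega) hjk hk
    refine ⟨fun p hp => dist_pt_lt_of_mem_sphere_inter (hij'.trans hjk').ne hp ?_,
      fun p hp => lt_dist_pt_of_mem_sphere_inter hij'.ne hp ?_,
      fun p hp => lt_dist_pt_of_mem_sphere_inter hjk'.ne hp ?_⟩ <;> nlinarith
  · intro i j k _ _ hj hj' hk hk' _ _ hjk
    exact nonSepInt_pt (hne j k hj hj' hk hk' hjk) _ _

/-- For `m ≥ 3`, `r > 0` and real numbers `a 1 < a 2 < … < a m` with `a m − a 1 < 2r`,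
the circles `C i` of radius `r` centered at `(a i, 0)` satisfy: (a) every two of them meet in
exactly two points; (b) no point lies on three of them; (c) for `i < j < k`, both points of
`C i ∩ C k` lie in the open disk of `C j`, both points of `C i ∩ C j` lie strictly outside the
closed disk of `C k`, and both points of `C j ∩ C k` lie strictly outside the closed disk of
`C i`.  In particular every triple of these circles is NonKrupp. -/
theorem stmt5 (m : ℕ) (hm : 3 ≤ m) (r : ℝ) (hr : 0 < r) (a : ℕ → ℝ)
    (hmono : ∀ i j : ℕ, 1 ≤ i → i < j → j ≤ m → a i < a j)
    (hgap : a m - a 1 < 2 * r) :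
    let C : ℕ → Set E2 := fun i => Metric.sphere (pt (a i) 0) r
    (∀ i j : ℕ, 1 ≤ i → i ≤ m → 1 ≤ j → j ≤ m → i ≠ j →
      ∃ p q : E2, p ≠ q ∧ C i ∩ C j = {p, q}) ∧
    (∀ i j k : ℕ, 1 ≤ i → i ≤ m → 1 ≤ j → j ≤ m → 1 ≤ k → k ≤ m →
      i ≠ j → i ≠ k → j ≠ k →
      ∀ x : E2, ¬ (x ∈ C i ∧ x ∈ C j ∧ x ∈ C k)) ∧
    (∀ i j k : ℕ, 1 ≤ i → i < j → j < k → k ≤ m →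
      (∀ p ∈ C i ∩ C k, dist p (pt (a j) 0) < r) ∧
      (∀ p ∈ C i ∩ C j, r < dist p (pt (a k) 0)) ∧
      (∀ p ∈ C j ∩ C k, r < dist p (pt (a i) 0))) ∧
    (∀ i j k : ℕ, 1 ≤ i → i ≤ m → 1 ≤ j → j ≤ m → 1 ≤ k → k ≤ m →
      i ≠ j → i ≠ k → j ≠ k →
      NonSepInt (pt (a i) 0) r (pt (a j) 0) r (pt (a k) 0) r) :=
  stmt5_general m r a hmono hgap
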